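/- arXiv:cond-mat/0108549 — 3 statements merged into one kernel-verified Lean document; each statement's English description precedes it below -/
import Mathlib

section
/- For every real S > 0, k ∈ ℝ and ε > 0, the Carr–Madan contour integral representation of the call payoff holds: (1/(2π)) ∫_{t∈ℝ} S^{iu+1} e^{−iuk} / (iu − u²) dt = max(S − e^k, 0), where u = t − iε, S^{iu+1} = exp((iu+1)·log S) with the real logarithm of S, and the integrand is absolutely integrable over t ∈ ℝ. -/
open MeasureTheory Complex Real Set Filter FourierTransform

lemma cm_aux_int {c : ℂ} (hc : 0 < c.re) :
    IntegrableOn (fun x : ℝ => Complex.exp (-(c * x))) (Set.Ioi 0) := by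
  refine (exp_neg_integrableOn_Ioi 0 hc).mono' ?_ ?_
  · exact (Complex.continuous_exp.comp (by fun_prop)).aestronglyMeasurable
  · filter_upwards with x
    simp [Complex.norm_exp, neg_mul]

lemma cm_aux_eval {c : ℂ} (hc : 0 < c.re) :
    ∫ x in Set.Ioi (0:ℝ), Complex.exp (-(c * x)) = 1 / c := by
  have hc0 : c ≠ 0 := fun h => by simp [h] at hc
  have h1 : Tendsto (fun b : ℝ => ∫ x in (0:ℝ)..b, Complex.exp (-(c * x))) atTop
      (nhds (∫ x in Set.Ioi (0:ℝ), Complex.exp (-(c * x)))) :=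
    intervalIntegral_tendsto_integral_Ioi 0 (cm_aux_int hc) tendsto_id
  have h2 : Tendsto (fun b : ℝ => ∫ x in (0:ℝ)..b, Complex.exp (-(c * x))) atTop
      (nhds (1 / c)) := by
    have heq : ∀ b : ℝ, (∫ x in (0:ℝ)..b, Complex.exp (-(c * x)))
        = (Complex.exp (-c * b) - 1) / (-c) := by
      intro b
      simp_rw [← neg_mul]
      rw [integral_exp_mul_complex (neg_ne_zero.2 hc0)]
      norm_num
    simp_rw [heq]
    have h3 : Tendsto (fun b : ℝ => Complex.exp (-c * b)) atTop (nhds 0) := by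
      rw [tendsto_zero_iff_norm_tendsto_zero]
      have : ∀ b : ℝ, ‖Complex.exp (-c * b)‖ = Real.exp (-(c.re * b)) := by
        intro b; simp [Complex.norm_exp]
      simp_rw [this]
      exact Real.tendsto_exp_atBot.comp
        (tendsto_neg_atBot_iff.2 (Tendsto.const_mul_atTop hc tendsto_id))
    have := (h3.sub_const 1).div_const (-c)
    convert this using 2
    field_simp
    ring
  exact tendsto_nhds_unique h1 h2

noncomputable def cmG (ε : ℝ) : ℝ → ℂ := fun x =>
  Complex.exp (-((ε : ℂ) * x)) - Complex.exp (-(((ε : ℂ) + 1) * x))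

noncomputable def cmH (ε : ℝ) : ℝ → ℂ := Set.indicator (Set.Ioi 0) (cmG ε)

lemma cmG_cont (ε : ℝ) : Continuous (cmG ε) := by
  unfold cmG; fun_prop

lemma cmH_eq_ite (ε : ℝ) : cmH ε = fun x => if x ≤ 0 then 0 else cmG ε x := by
  funext x
  rcases le_or_gt x 0 with h | h
  · simp [cmH, Set.indicator_apply, not_lt.2 h, h]
  · simp [cmH, Set.indicator_apply, h, not_le.2 h]

lemma cmH_cont (ε : ℝ) : Continuous (cmH ε) := by
  rw [cmH_eq_ite]
  apply Continuous.if_le continuous_const (cmG_cont ε) continuous_id continuous_const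
  intro x hx
  simp only [id] at hx
  simp [cmG, hx]

lemma cmH_integrable {ε : ℝ} (hε : 0 < ε) : Integrable (cmH ε) := by
  rw [cmH, integrable_indicator_iff measurableSet_Ioi]
  exact (cm_aux_int (by simp [hε]) |>.sub (cm_aux_int (by simp; positivity)))

lemma cmH_fourier {ε : ℝ} (hε : 0 < ε) (ξ : ℝ) :
    𝓕 (cmH ε) ξ = 1 / (((2 * π * ξ : ℝ) : ℂ) * Complex.I + ε)
      - 1 / (((2 * π * ξ : ℝ) : ℂ) * Complex.I + ε + 1) := by
  have hre1 : (0:ℝ) < (((2 * π * ξ : ℝ) : ℂ) * Complex.I + ε).re := by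
    simp [hε]
  have hre2 : (0:ℝ) < (((2 * π * ξ : ℝ) : ℂ) * Complex.I + ε + 1).re := by
    simp; positivity
  rw [Real.fourier_real_eq_integral_exp_smul]
  have : ∀ v : ℝ, Complex.exp (↑(-2 * π * v * ξ) * Complex.I) • cmH ε v
      = Set.indicator (Set.Ioi 0) (fun v : ℝ =>
          Complex.exp (-((((2 * π * ξ : ℝ) : ℂ) * Complex.I + ε) * v))
          - Complex.exp (-((((2 * π * ξ : ℝ) : ℂ) * Complex.I + ε + 1) * v))) v := by
    intro v
    rw [cmH, smul_eq_mul, Set.indicator_apply, Set.indicator_apply]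
    by_cases hv : 0 < v
    · simp only [Set.mem_Ioi, hv, if_true, cmG]
      rw [mul_sub, ← Complex.exp_add, ← Complex.exp_add]
      congr 1 <;> push_cast <;> ring
    · simp [Set.mem_Ioi, hv]
  simp_rw [this]
  rw [integral_indicator measurableSet_Ioi,
    integral_sub (cm_aux_int hre1) (cm_aux_int hre2), cm_aux_eval hre1, cm_aux_eval hre2]

noncomputable def cmF (ε : ℝ) : ℝ → ℂ := fun ξ =>
  1 / (((2 * π * ξ : ℝ) : ℂ) * Complex.I + ε)
    - 1 / (((2 * π * ξ : ℝ) : ℂ) * Complex.I + ε + 1)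

lemma cmA_ne {ε : ℝ} (hε : 0 < ε) (ξ : ℝ) :
    (((2 * π * ξ : ℝ) : ℂ) * Complex.I + ε) ≠ 0 := by
  intro h
  have := congrArg Complex.re h
  simp at this
  exact hε.ne' this

lemma cmA1_ne {ε : ℝ} (hε : 0 < ε) (ξ : ℝ) :
    (((2 * π * ξ : ℝ) : ℂ) * Complex.I + ε + 1) ≠ 0 := by
  intro h
  have := congrArg Complex.re h
  simp at this
  nlinarith [this]

lemma cmF_eq {ε : ℝ} (hε : 0 < ε) (ξ : ℝ) :
    cmF ε ξ = 1 / ((((2 * π * ξ : ℝ) : ℂ) * Complex.I + ε)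
      * (((2 * π * ξ : ℝ) : ℂ) * Complex.I + ε + 1)) := by
  have h1 := cmA_ne hε ξ
  have h2 := cmA1_ne hε ξ
  set a : ℂ := ((2 * π * ξ : ℝ) : ℂ) * Complex.I + ε with ha
  show 1 / a - 1 / (a + 1) = 1 / (a * (a + 1))
  rw [div_sub_div _ _ h1 h2]
  simp

lemma cmF_cont {ε : ℝ} (hε : 0 < ε) : Continuous (cmF ε) := by
  unfold cmF
  apply Continuous.sub
  · exact continuous_const.div (by fun_prop) (cmA_ne hε)
  · exact continuous_const.div (by fun_prop) (cmA1_ne hε)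

lemma cmF_integrable {ε : ℝ} (hε : 0 < ε) : Integrable (cmF ε) := by
  set c₀ := min ε 1 with hc₀
  have hc₀pos : 0 < c₀ := lt_min hε one_pos
  apply Integrable.mono' ((integrable_inv_one_add_sq).const_mul (2 / c₀))
    ((cmF_cont hε).aestronglyMeasurable)
  filter_upwards with ξ
  set a : ℂ := ((2 * π * ξ : ℝ) : ℂ) * Complex.I + ε with ha
  have hare : a.re = ε := by simp [ha]
  have haim : a.im = 2 * π * ξ := by simp [ha]
  have h1 : ε ≤ ‖a‖ := by
    rw [← hare]; exact (le_abs_self _).trans (Complex.abs_re_le_norm a)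
  have h2 : |ξ| ≤ ‖a‖ := by
    calc |ξ| ≤ |2 * π * ξ| := by
          rw [abs_mul]
          nlinarith [abs_nonneg ξ, abs_nonneg (2*π), Real.pi_gt_three, abs_of_pos (by positivity : (0:ℝ) < 2*π)]
      _ = |a.im| := by rw [haim]
      _ ≤ ‖a‖ := Complex.abs_im_le_norm a
  have h3 : 1 ≤ ‖a + 1‖ := by
    have : (a + 1).re = ε + 1 := by simp [ha]
    calc (1:ℝ) ≤ ε + 1 := by linarith
      _ = |(a+1).re| := by rw [this]; exact (abs_of_pos (by linarith)).symm
      _ ≤ ‖a+1‖ := Complex.abs_re_le_norm _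
  have h4 : |ξ| ≤ ‖a + 1‖ := by
    have him : (a + 1).im = 2 * π * ξ := by simp [ha]
    calc |ξ| ≤ |2 * π * ξ| := by
          rw [abs_mul]
          nlinarith [abs_nonneg ξ, Real.pi_gt_three, abs_of_pos (by positivity : (0:ℝ) < 2*π)]
      _ = |(a+1).im| := by rw [him]
      _ ≤ ‖a+1‖ := Complex.abs_im_le_norm _
  have key : c₀ * (1 + ξ ^ 2) ≤ 2 * (‖a‖ * ‖a + 1‖) := by
    have hε1 : c₀ ≤ ε := min_le_left _ _
    have hc1 : c₀ ≤ 1 := min_le_right _ _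
    have hsq : ξ ^ 2 = |ξ| * |ξ| := by rw [← abs_mul, abs_mul_self]; ring
    nlinarith [norm_nonneg a, norm_nonneg (a+1), abs_nonneg ξ]
  have habs : ‖cmF ε ξ‖ = (‖a‖ * ‖a + 1‖)⁻¹ := by
    rw [cmF_eq hε ξ, ← ha]
    simp [map_mul, mul_comm]
  have hpos : 0 < ‖a‖ * ‖a + 1‖ := by
    refine mul_pos (norm_pos_iff.mpr ?_) (norm_pos_iff.mpr ?_)
    · rw [ha]; exact cmA_ne hε ξ
    · rw [ha]; exact cmA1_ne hε ξ
  rw [habs, inv_eq_one_div]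
  have hc₀' : c₀ ≠ 0 := hc₀pos.ne'
  have hξ : (1:ℝ) + ξ ^ 2 ≠ 0 := by positivity
  have h2' : 2 / c₀ * (1 + ξ ^ 2)⁻¹ = 2 / (c₀ * (1 + ξ ^ 2)) := by
    field_simp
  rw [h2', div_le_div_iff₀ hpos (by positivity)]
  linarith [key]

/-- The Carr–Madan contour-integral representation of the call payoff:
for `S > 0`, `k ∈ ℝ` and `ε > 0`, integrating along the contour
`{t - iε : t ∈ ℝ}`, the integrand `S^{iu+1} e^{-iuk} / (iu - u²)` is
absolutely integrable and
`(1/(2π)) ∫ S^{iu+1} e^{-iuk} / (iu - u²) dt = max (S - e^k) 0`. -/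
theorem carr_madan_call_payoff (S k ε : ℝ) (hS : 0 < S) (hε : 0 < ε) :
    Integrable (fun t : ℝ =>
      Complex.exp ((Complex.I * ((t : ℂ) - Complex.I * ε) + 1) * (Real.log S : ℂ)) *
        Complex.exp (-Complex.I * ((t : ℂ) - Complex.I * ε) * (k : ℂ)) /
        (Complex.I * ((t : ℂ) - Complex.I * ε) - ((t : ℂ) - Complex.I * ε) ^ 2)) ∧
    (1 / (2 * (π : ℂ))) *
        ∫ t : ℝ,
          Complex.exp ((Complex.I * ((t : ℂ) - Complex.I * ε) + 1) * (Real.log S : ℂ)) *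
            Complex.exp (-Complex.I * ((t : ℂ) - Complex.I * ε) * (k : ℂ)) /
            (Complex.I * ((t : ℂ) - Complex.I * ε) - ((t : ℂ) - Complex.I * ε) ^ 2) =
      ((max (S - Real.exp k) 0 : ℝ) : ℂ) := by
  have hπ : (0:ℝ) < 2 * π := by positivity
  set x : ℝ := Real.log S - k with hx
  have hxc : (x : ℂ) = (Real.log S : ℂ) - (k : ℂ) := by rw [hx]; push_cast; ring
  have hsc : ∀ t : ℝ, 2 * π * (t / (2 * π)) = t := by
    intro t; field_simp
  have hb_ne : ∀ t : ℝ, ((t : ℂ) * Complex.I + ε) ≠ 0 := by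
    intro t h
    have := congrArg Complex.re h
    simp at this
    exact hε.ne' this
  have hb1_ne : ∀ t : ℝ, ((t : ℂ) * Complex.I + ε + 1) ≠ 0 := by
    intro t h
    have := congrArg Complex.re h
    simp at this
    nlinarith [this]
  have hIu : ∀ t : ℝ, Complex.I * ((t : ℂ) - Complex.I * ε) = (t : ℂ) * Complex.I + ε := by
    intro t
    linear_combination (-(ε : ℂ)) * Complex.I_sq
  have key : ∀ t : ℝ,
      Complex.exp ((Complex.I * ((t : ℂ) - Complex.I * ε) + 1) * (Real.log S : ℂ)) *
        Complex.exp (-Complex.I * ((t : ℂ) - Complex.I * ε) * (k : ℂ)) /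
        (Complex.I * ((t : ℂ) - Complex.I * ε) - ((t : ℂ) - Complex.I * ε) ^ 2)
      = (S : ℂ) * Complex.exp ((ε * x : ℝ) : ℂ) *
          (Complex.exp (Complex.I * t * x) * cmF ε (t / (2 * π))) := by
    intro t
    have hF' : cmF ε (t / (2 * π))
        = 1 / ((t : ℂ) * Complex.I + ε) - 1 / ((t : ℂ) * Complex.I + ε + 1) := by
      unfold cmF; rw [hsc t]
    have hsq : (Complex.I * ((t : ℂ) - Complex.I * ε)) ^ 2
        = -((t : ℂ) - Complex.I * ε) ^ 2 := by
      rw [mul_pow, Complex.I_sq]; ring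
    have hden : Complex.I * ((t : ℂ) - Complex.I * ε) - ((t : ℂ) - Complex.I * ε) ^ 2
        = ((t : ℂ) * Complex.I + ε) * ((t : ℂ) * Complex.I + ε + 1) := by
      rw [← hIu t]
      linear_combination -hsq
    have hS' : (S : ℂ) = Complex.exp ((Real.log S : ℂ)) := by
      rw [← Complex.ofReal_exp, Real.exp_log hS]
    have hnum : Complex.exp ((Complex.I * ((t : ℂ) - Complex.I * ε) + 1) * (Real.log S : ℂ)) *
        Complex.exp (-Complex.I * ((t : ℂ) - Complex.I * ε) * (k : ℂ))
        = (S : ℂ) * Complex.exp ((ε * x : ℝ) : ℂ) * Complex.exp (Complex.I * t * x) := by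
      rw [hS', ← Complex.exp_add, ← Complex.exp_add, ← Complex.exp_add]
      congr 1
      push_cast
      rw [hxc]
      linear_combination (-((Real.log S : ℂ) - (k : ℂ)) * (ε : ℂ)) * Complex.I_sq
    rw [hnum, hden, hF']
    field_simp [hb_ne t, hb1_ne t]
    rw [mul_comm Complex.I, div_sub_div _ _ (hb_ne t) (hb1_ne t)]
    ring
  have hfun : (fun t : ℝ =>
      Complex.exp ((Complex.I * ((t : ℂ) - Complex.I * ε) + 1) * (Real.log S : ℂ)) *
        Complex.exp (-Complex.I * ((t : ℂ) - Complex.I * ε) * (k : ℂ)) /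
        (Complex.I * ((t : ℂ) - Complex.I * ε) - ((t : ℂ) - Complex.I * ε) ^ 2))
      = fun t : ℝ => (S : ℂ) * Complex.exp ((ε * x : ℝ) : ℂ) *
          (Complex.exp (Complex.I * t * x) * cmF ε (t / (2 * π))) := funext key
  have hFcomp : Integrable (fun t : ℝ => cmF ε (t / (2 * π))) :=
    (cmF_integrable hε).comp_div hπ.ne'
  have hmul : Integrable (fun t : ℝ => Complex.exp (Complex.I * t * x) * cmF ε (t / (2 * π))) := by
    refine hFcomp.bdd_mul (c := 1) ?_ (Filter.Eventually.of_forall fun t => ?_)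
    · exact (Complex.continuous_exp.comp (by fun_prop)).aestronglyMeasurable
    · simp [Complex.norm_exp, Complex.mul_re, Complex.mul_im]
  constructor
  · rw [hfun]
    exact hmul.const_mul _
  · rw [hfun]
    rw [MeasureTheory.integral_const_mul]
    set W : ℝ → ℂ := fun ξ => Complex.exp (((-2 * π * ξ * (-x) : ℝ) : ℂ) * Complex.I) * cmF ε ξ
      with hW
    have hWt : (fun t : ℝ => Complex.exp (Complex.I * t * x) * cmF ε (t / (2 * π)))
        = fun t : ℝ => W (t / (2 * π)) := by
      funext t
      rw [hW]
      simp only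
      congr 1
      have hr : -2 * π * (t / (2 * π)) * (-x) = t * x := by
        field_simp
      rw [hr]
      push_cast
      ring
    rw [hWt, MeasureTheory.Measure.integral_comp_div W (2 * π)]
    have h𝓕 : 𝓕 (cmH ε) = cmF ε := funext fun ξ => cmH_fourier hε ξ
    have hWint : ∫ ξ : ℝ, W ξ = cmH ε x := by
      have h1 : ∫ ξ : ℝ, W ξ = 𝓕 (𝓕 (cmH ε)) (-x) := by
        rw [Real.fourier_real_eq_integral_exp_smul]
        congr 1
        funext ξ
        rw [hW, smul_eq_mul, h𝓕]
      rw [h1, ← Real.fourierInv_eq_fourier_neg]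
      exact (cmH_integrable hε).fourierInv_fourier_eq (h𝓕 ▸ cmF_integrable hε)
        (cmH_cont ε).continuousAt
    rw [hWint, abs_of_pos hπ, Complex.real_smul]
    have hcoef : 1 / (2 * (π : ℂ)) * ((S : ℂ) * Complex.exp ((ε * x : ℝ) : ℂ) *
        (((2 * π : ℝ) : ℂ) * cmH ε x))
        = (S : ℂ) * Complex.exp ((ε * x : ℝ) : ℂ) * cmH ε x := by
      have hπc : ((π : ℝ) : ℂ) ≠ 0 := Complex.ofReal_ne_zero.2 Real.pi_ne_zero
      push_cast
      field_simp
    rw [hcoef]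
    rcases le_or_gt x 0 with hx0 | hx0
    · have hmax : max (S - Real.exp k) 0 = 0 := by
        rw [max_eq_right]
        have : Real.log S ≤ k := by linarith [hx0, hx ▸ hx0]
        have := (Real.log_le_iff_le_exp hS).1 this
        linarith
      have hH0 : cmH ε x = 0 := by
        rw [cmH, Set.indicator_apply_eq_zero.2]
        intro hmem
        exact absurd hmem (by simp [not_lt.2 hx0])
      rw [hH0, hmax]
      push_cast
      ring
    · have hH : cmH ε x = Complex.exp (-((ε : ℂ) * x)) - Complex.exp (-(((ε : ℂ) + 1) * x)) := by
        rw [cmH, Set.indicator_of_mem (Set.mem_Ioi.2 hx0)]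
        rfl
      have hlt : Real.exp k < S := by
        have : k < Real.log S := by linarith
        calc Real.exp k < Real.exp (Real.log S) := Real.exp_lt_exp.2 this
          _ = S := Real.exp_log hS
      have hmax : max (S - Real.exp k) 0 = S - Real.exp k := max_eq_left (by linarith)
      rw [hH, hmax]
      have h1 : Complex.exp ((ε * x : ℝ) : ℂ) * Complex.exp (-((ε : ℂ) * x)) = 1 := by
        rw [← Complex.exp_add, ← Complex.exp_zero]
        congr 1
        push_cast
        ring
      have h2 : Complex.exp ((ε * x : ℝ) : ℂ) * Complex.exp (-(((ε : ℂ) + 1) * x))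
          = ((Real.exp (-x) : ℝ) : ℂ) := by
        rw [← Complex.exp_add, Complex.ofReal_exp]
        congr 1
        push_cast
        ring
      have hxk : Real.exp (-x) = Real.exp k / S := by
        rw [hx, neg_sub, Real.exp_sub, Real.exp_log hS]
      calc (S : ℂ) * Complex.exp ((ε * x : ℝ) : ℂ) *
            (Complex.exp (-((ε : ℂ) * x)) - Complex.exp (-(((ε : ℂ) + 1) * x)))
          = (S : ℂ) * (Complex.exp ((ε * x : ℝ) : ℂ) * Complex.exp (-((ε : ℂ) * x))
            - Complex.exp ((ε * x : ℝ) : ℂ) * Complex.exp (-(((ε : ℂ) + 1) * x))) := by ring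
        _ = (S : ℂ) * (1 - ((Real.exp (-x) : ℝ) : ℂ)) := by rw [h1, h2]
        _ = ((S - Real.exp k : ℝ) : ℂ) := by
            rw [hxk]
            have hS0 : (S : ℂ) ≠ 0 := Complex.ofReal_ne_zero.2 hS.ne'
            push_cast
            field_simp
end

section
/- Let (Ω, 𝓕, P) be a probability space, X : Ω → ℝ a random variable, S > 0, k ∈ ℝ its log-strike, and ε ∈ (0,1) such that E[e^{(1+ε)X}] < ∞. Then E[max(S e^X − e^k, 0)] = (1/(2π)) ∫_{t∈ℝ} S^{iu+1} Ψ(u) e^{−iuk} / (iu − u²) dt, where u = t − iε, S^{iu+1} = exp((iu+1)·log S), and Ψ(u) = E[e^{(iu+1)X}]. -/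
open MeasureTheory Complex Real Set FourierTransform

lemma cexp_integrableOn_Ioi (a : ℝ) {c : ℂ} (hc : c.re < 0) :
    IntegrableOn (fun x : ℝ => Complex.exp (c * x)) (Ioi a) := by
  apply Integrable.mono' (g := fun x : ℝ => Real.exp (c.re * x))
  · have : IntegrableOn (fun x : ℝ => Real.exp (-(-c.re) * x)) (Ioi a) :=
      exp_neg_integrableOn_Ioi a (by linarith)
    simpa [IntegrableOn] using this
  · exact (Complex.continuous_exp.comp (by continuity)).aestronglyMeasurable
  · filter_upwards with x
    rw [Complex.norm_exp]
    simp

lemma integral_cexp_Ioi (a : ℝ) {c : ℂ} (hc : c.re < 0) :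
    ∫ x in Ioi a, Complex.exp (c * x) = -Complex.exp (c * a) / c := by
  have hc0 : c ≠ 0 := fun h => by simp [h] at hc
  refine tendsto_nhds_unique
    (intervalIntegral_tendsto_integral_Ioi a (cexp_integrableOn_Ioi a hc) Filter.tendsto_id) ?_
  have key : ∀ b : ℝ, ∫ x in a..b, Complex.exp (c * x) =
      (Complex.exp (c * b) - Complex.exp (c * a)) / c := fun b =>
    integral_exp_mul_complex hc0
  simp only [key]
  have h1 : Filter.Tendsto (fun b : ℝ => Complex.exp (c * b)) Filter.atTop (nhds 0) := by
    rw [tendsto_zero_iff_norm_tendsto_zero]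
    simp only [Complex.norm_exp]
    have : ∀ b : ℝ, (c * (b:ℂ)).re = c.re * b := by intro b; simp
    simp only [this]
    exact Real.tendsto_exp_atBot.comp (Filter.tendsto_id.const_mul_atTop_of_neg hc)
  have h2 := (h1.sub (tendsto_const_nhds (x := Complex.exp (c * a)))).div_const c
  rw [zero_sub] at h2
  simpa using h2

noncomputable def gfun (k ε : ℝ) (v : ℝ) : ℂ :=
  ((max (Real.exp v - Real.exp k) 0 * Real.exp (-(1+ε)*v) : ℝ) : ℂ)

noncomputable def Ffun (k ε : ℝ) (t : ℝ) : ℂ :=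
  Complex.exp (-Complex.I*((t:ℂ)-Complex.I*ε)*k) /
    (Complex.I*((t:ℂ)-Complex.I*ε) - ((t:ℂ)-Complex.I*ε)^2)

lemma ft_calc (k ε : ℝ) (hε : 0 < ε) (t : ℝ) :
    ∫ v : ℝ, Complex.exp (-(t:ℂ)*v*Complex.I) * gfun k ε v
      = Complex.exp (-Complex.I*((t:ℂ) - Complex.I*ε)*k) /
        (Complex.I*((t:ℂ)-Complex.I*ε) - ((t:ℂ)-Complex.I*ε)^2) := by
  set α : ℂ := 1 + ε + Complex.I*t with hα
  set u : ℂ := (t:ℂ) - Complex.I*ε with hu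
  have hαre : α.re = 1 + ε := by simp [hα]
  have h1αre : ((1:ℂ) - α).re = -ε := by simp [Complex.sub_re, hαre]
  have hre1 : ((1:ℂ) - α).re < 0 := by rw [h1αre]; linarith
  have hre2 : (-α).re < 0 := by simp [hαre]; linarith
  have hα0 : α ≠ 0 := fun h => by rw [h] at hαre; simp at hαre; linarith
  have h1α0 : (1:ℂ) - α ≠ 0 := fun h => by rw [h] at h1αre; simp at h1αre; linarith
  have hsupp : ∀ v : ℝ, v ∉ Ioi k →
      Complex.exp (-(t:ℂ)*v*Complex.I) * gfun k ε v = 0 := by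
    intro v hv
    simp only [mem_Ioi, not_lt] at hv
    have : Real.exp v - Real.exp k ≤ 0 := by
      simp [Real.exp_le_exp, hv]
    simp [gfun, max_eq_right this]
  rw [← setIntegral_eq_integral_of_forall_compl_eq_zero hsupp]
  have hcong : ∀ v ∈ Ioi k, Complex.exp (-(t:ℂ)*v*Complex.I) * gfun k ε v
      = Complex.exp (((1:ℂ)-α) * v) - Real.exp k * Complex.exp ((-α) * v) := by
    intro v hv
    simp only [mem_Ioi] at hv
    have hmax : max (Real.exp v - Real.exp k) 0 = Real.exp v - Real.exp k :=
      max_eq_left (by have := Real.exp_lt_exp.2 hv; linarith)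
    have key : ∀ a b c d : ℂ, Complex.exp a * ((Complex.exp b - Complex.exp c) * Complex.exp d)
        = Complex.exp (a+b+d) - Complex.exp c * Complex.exp (a+d) := by
      intros a b c d
      rw [Complex.exp_add, Complex.exp_add, Complex.exp_add]
      ring
    have ea : (-(t:ℂ)*v*Complex.I) + v + (-(1+(ε:ℂ)))*v = ((1:ℂ)-α)*v := by
      rw [hα]; ring
    have eb : (-(t:ℂ)*v*Complex.I) + (-(1+(ε:ℂ)))*v = -α*v := by
      rw [hα]; ring
    unfold gfun
    rw [hmax]
    push_cast
    rw [key, ea, eb]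
  rw [setIntegral_congr_fun measurableSet_Ioi hcong]
  rw [integral_sub (cexp_integrableOn_Ioi k hre1) ((cexp_integrableOn_Ioi k hre2).const_mul _),
    integral_const_mul, integral_cexp_Ioi k hre1, integral_cexp_Ioi k hre2]
  have e1 : ((1:ℂ)-α) * k = -Complex.I*u*k := by
    rw [hα, hu]; linear_combination (-(ε:ℂ)*k) * Complex.I_sq
  have e2 : (-α) * (k:ℂ) = -Complex.I*u*k + (-(k:ℂ)) := by
    rw [hα, hu]; linear_combination (-(ε:ℂ)*k) * Complex.I_sq
  have e3 : Complex.I*u - u^2 = -(((1:ℂ)-α) * α) := by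
    rw [hα, hu]; linear_combination (-(ε:ℂ) - (ε:ℂ)^2 - (t:ℂ)^2) * Complex.I_sq
  have e4 : ((Real.exp k : ℝ) : ℂ) = Complex.exp (k : ℂ) := by push_cast; ring
  rw [e1, e2, e3, e4, Complex.exp_add]
  have h5 : Complex.exp (-(k:ℂ)) * Complex.exp (k:ℂ) = 1 := by
    rw [← Complex.exp_add]; simp
  have h6 : Complex.exp (k:ℂ) * -(Complex.exp (-Complex.I*u*(k:ℂ)) * Complex.exp (-(k:ℂ)))
      = -Complex.exp (-Complex.I*u*(k:ℂ)) := by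
    calc Complex.exp (k:ℂ) * -(Complex.exp (-Complex.I*u*(k:ℂ)) * Complex.exp (-(k:ℂ)))
        = -(Complex.exp (-(k:ℂ)) * Complex.exp (k:ℂ)) * Complex.exp (-Complex.I*u*(k:ℂ)) := by
          ring
      _ = -Complex.exp (-Complex.I*u*(k:ℂ)) := by rw [h5]; ring
  rw [← mul_div_assoc, h6]
  have hden : ((1:ℂ)-α) * α ≠ 0 := mul_ne_zero h1α0 hα0
  field_simp
  ring
lemma gfun_cont (k ε : ℝ) : Continuous (gfun k ε) := by
  unfold gfun
  apply Complex.continuous_ofReal.comp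
  exact ((Real.continuous_exp.sub continuous_const).max continuous_const).mul
    (Real.continuous_exp.comp (by continuity))

lemma gfun_integrable (k ε : ℝ) (hε : 0 < ε) : Integrable (gfun k ε) := by
  rw [← integrableOn_univ, ← Iic_union_Ioi (a := k)]
  apply IntegrableOn.union
  · apply (integrableOn_zero (ε' := ℂ)).congr_fun ?_ measurableSet_Iic
    intro v hv
    simp only [mem_Iic] at hv
    have : Real.exp v - Real.exp k ≤ 0 := by simp [Real.exp_le_exp, hv]
    simp [gfun, max_eq_right this]
  · apply Integrable.mono' (g := fun v : ℝ => Real.exp (-ε * v))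
    · exact exp_neg_integrableOn_Ioi k hε
    · exact ((gfun_cont k ε).comp continuous_id).aestronglyMeasurable
    · filter_upwards with v
      unfold gfun
      have hnn : (0:ℝ) ≤ max (Real.exp v - Real.exp k) 0 * Real.exp (-(1+ε)*v) := by
        positivity
      simp only [Complex.norm_real, Real.norm_eq_abs]
      rw [_root_.abs_of_nonneg hnn]
      rcases le_or_gt (Real.exp v - Real.exp k) 0 with h | h
      · rw [max_eq_right h]; simp; positivity
      · rw [max_eq_left h.le]
        have h2 : Real.exp v - Real.exp k ≤ Real.exp v := by
          have := Real.exp_pos k; linarith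
        calc (Real.exp v - Real.exp k) * Real.exp (-(1+ε)*v)
            ≤ Real.exp v * Real.exp (-(1+ε)*v) := by
              apply mul_le_mul_of_nonneg_right h2 (Real.exp_pos _).le
          _ = Real.exp (-ε * v) := by rw [← Real.exp_add]; ring_nf
lemma den_lb (ε : ℝ) (hε : 0 < ε) (t : ℝ) :
    t^2 + ε^2 ≤ ‖Complex.I*((t:ℂ)-Complex.I*ε) - ((t:ℂ)-Complex.I*ε)^2‖ := by
  set u : ℂ := (t:ℂ) - Complex.I*ε with hu
  have hfac : Complex.I*u - u^2 = u * (Complex.I - u) := by ring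
  rw [hfac, norm_mul]
  have h1 : ‖u‖ = Real.sqrt (t^2 + ε^2) := by
    rw [Complex.norm_def]
    congr 1
    rw [hu]
    simp [Complex.normSq_apply]
    ring
  have h2 : ‖Complex.I - u‖ = Real.sqrt ((-t)^2 + (1+ε)^2) := by
    rw [Complex.norm_def]
    congr 1
    rw [hu]
    simp [Complex.normSq_apply]
    ring
  rw [h1, h2]
  have h3 : t^2 + ε^2 ≤ (-t)^2 + (1+ε)^2 := by nlinarith
  calc t^2 + ε^2 = Real.sqrt (t^2+ε^2) * Real.sqrt (t^2+ε^2) := by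
        rw [Real.mul_self_sqrt (by positivity)]
    _ ≤ Real.sqrt (t^2+ε^2) * Real.sqrt ((-t)^2+(1+ε)^2) := by
        apply mul_le_mul_of_nonneg_left (Real.sqrt_le_sqrt h3) (Real.sqrt_nonneg _)

lemma den_ne (ε : ℝ) (hε : 0 < ε) (t : ℝ) :
    Complex.I*((t:ℂ)-Complex.I*ε) - ((t:ℂ)-Complex.I*ε)^2 ≠ 0 := by
  intro h
  have := den_lb ε hε t
  rw [h, norm_zero] at this
  nlinarith

lemma Ffun_norm_le (k ε : ℝ) (hε : 0 < ε) (t : ℝ) :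
    ‖Ffun k ε t‖ ≤ Real.exp (-ε*k) / (t^2 + ε^2) := by
  unfold Ffun
  rw [norm_div]
  have hnum : ‖Complex.exp (-Complex.I*((t:ℂ)-Complex.I*ε)*k)‖ = Real.exp (-ε*k) := by
    rw [Complex.norm_exp]
    congr 1
    have : -Complex.I*((t:ℂ)-Complex.I*ε)*(k:ℂ)
        = ((-ε*k : ℝ) : ℂ) + Complex.I * ((-(t*k) : ℝ) : ℂ) := by
      push_cast
      linear_combination ((ε:ℂ)*k) * Complex.I_sq
    rw [this]
    simp
  rw [hnum]
  gcongr
  exact den_lb ε hε t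

lemma Ffun_comp_integrable (k ε : ℝ) (hε : 0 < ε) (hε1 : ε < 1) :
    Integrable (fun ξ : ℝ => Ffun k ε (2*π*ξ)) := by
  have hcont : Continuous (fun ξ : ℝ => Ffun k ε (2*π*ξ)) := by
    unfold Ffun
    apply Continuous.div
    · apply Complex.continuous_exp.comp
      continuity
    · continuity
    · intro ξ; exact den_ne ε hε _
  apply Integrable.mono' ((integrable_inv_one_add_sq).const_mul (Real.exp (-ε*k)/ε^2))
    hcont.aestronglyMeasurable
  filter_upwards with ξ
  have h1 := Ffun_norm_le k ε hε (2*π*ξ)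
  have h2 : ε^2 * (1+ξ^2) ≤ (2*π*ξ)^2 + ε^2 := by
    have hπ : (1:ℝ) ≤ π := by linarith [Real.pi_gt_three]
    have h3 : ε^2 ≤ 1 := by nlinarith
    have hπ2 : (1:ℝ) ≤ π^2 := by nlinarith
    nlinarith [mul_le_mul_of_nonneg_right h3 (sq_nonneg ξ),
      mul_le_mul_of_nonneg_right hπ2 (sq_nonneg ξ)]
  calc ‖Ffun k ε (2*π*ξ)‖ ≤ Real.exp (-ε*k) / ((2*π*ξ)^2 + ε^2) := h1
    _ ≤ Real.exp (-ε*k) / (ε^2 * (1+ξ^2)) := by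
        apply div_le_div_of_nonneg_left (Real.exp_pos _).le (by positivity) h2
    _ = Real.exp (-ε*k)/ε^2 * (1+ξ^2)⁻¹ := by
        rw [div_mul_eq_div_div]
        ring

lemma ft_calc' (k ε : ℝ) (hε : 0 < ε) (t : ℝ) :
    ∫ v : ℝ, Complex.exp (-(t:ℂ)*v*Complex.I) * gfun k ε v = Ffun k ε t :=
  ft_calc k ε hε t
lemma ftg_eq (k ε : ℝ) (hε : 0 < ε) : 𝓕 (gfun k ε) = fun ξ : ℝ => Ffun k ε (2*π*ξ) := by
  funext ξ
  rw [Real.fourier_real_eq_integral_exp_smul]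
  rw [← ft_calc' k ε hε (2*π*ξ)]
  congr 1
  funext v
  rw [smul_eq_mul]
  congr 1
  push_cast
  ring

lemma pointwise_formula (k ε : ℝ) (hε : 0 < ε) (hε1 : ε < 1) (x : ℝ) :
    ((max (Real.exp x - Real.exp k) 0 : ℝ) : ℂ) =
      (1/(2*(π:ℂ))) * ∫ t : ℝ,
        Complex.exp ((Complex.I*((t:ℂ)-Complex.I*ε)+1) * x) * Ffun k ε t := by
  have hinv := (gfun_integrable k ε hε).fourierInv_fourier_eq
    (by rw [ftg_eq k ε hε]; exact Ffun_comp_integrable k ε hε hε1)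
    ((gfun_cont k ε).continuousAt (x := x))
  rw [ftg_eq k ε hε] at hinv
  rw [Real.fourierInv_eq_fourier_neg,
    Real.fourier_real_eq_integral_exp_smul] at hinv
  -- hinv : ∫ ξ, cexp (↑(-2π ξ (-x)) * I) • Ffun k ε (2πξ) = gfun k ε x
  have key : ((max (Real.exp x - Real.exp k) 0 : ℝ) : ℂ)
      = gfun k ε x * Complex.exp (((1+ε : ℝ) : ℂ) * x) := by
    unfold gfun
    push_cast
    rw [mul_assoc, ← Complex.exp_add,
      show -(1 + (ε:ℂ)) * x + (1 + (ε:ℂ)) * x = 0 by ring, Complex.exp_zero, mul_one]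
  rw [key, ← hinv, ← integral_mul_const]
  have step1 : (∫ ξ : ℝ, Complex.exp (↑(-2 * π * ξ * (-x)) * Complex.I) • Ffun k ε (2*π*ξ)
        * Complex.exp (((1+ε : ℝ) : ℂ) * x))
      = ∫ ξ : ℝ, (fun t : ℝ => Complex.exp ((Complex.I*((t:ℂ)-Complex.I*ε)+1) * x)
        * Ffun k ε t) (2*π*ξ) := by
    congr 1
    funext ξ
    simp only [smul_eq_mul]
    rw [mul_assoc, mul_comm (Ffun k ε (2*π*ξ)), ← mul_assoc, ← Complex.exp_add]
    congr 2
    push_cast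
    linear_combination ((ε:ℂ) * x) * Complex.I_sq
  rw [step1]
  rw [MeasureTheory.Measure.integral_comp_mul_left
    (fun t : ℝ => Complex.exp ((Complex.I*((t:ℂ)-Complex.I*ε)+1) * x) * Ffun k ε t) (2*π)]
  rw [abs_of_pos (by positivity : (0:ℝ) < (2*π)⁻¹)]
  rw [Complex.real_smul]
  push_cast
  rw [one_div]

lemma Ffun_cont (k ε : ℝ) (hε : 0 < ε) : Continuous (Ffun k ε) := by
  unfold Ffun
  apply Continuous.div
  · apply Complex.continuous_exp.comp
    continuity
  · continuity
  · intro t; exact den_ne ε hε t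

lemma norm_cexp_coeff (ε : ℝ) (t x : ℝ) :
    ‖Complex.exp ((Complex.I*((t:ℂ)-Complex.I*ε)+1) * (x:ℂ))‖ = Real.exp ((1+ε)*x) := by
  rw [Complex.norm_exp]
  congr 1
  have : (Complex.I*((t:ℂ)-Complex.I*ε)+1) * (x:ℂ)
      = (((1+ε)*x : ℝ) : ℂ) + Complex.I * (((t*x) : ℝ) : ℂ) := by
    push_cast
    linear_combination (-(ε:ℂ)*x) * Complex.I_sq
  rw [this]
  simp

lemma Ffun_norm_le' (k ε : ℝ) (hε : 0 < ε) (hε1 : ε < 1) (t : ℝ) :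
    ‖Ffun k ε t‖ ≤ Real.exp (-ε*k)/ε^2 * (1+t^2)⁻¹ := by
  have h1 := Ffun_norm_le k ε hε t
  have h2 : ε^2 * (1+t^2) ≤ t^2 + ε^2 := by
    nlinarith [mul_le_mul_of_nonneg_right (show ε^2 ≤ 1 by nlinarith) (sq_nonneg t)]
  calc ‖Ffun k ε t‖ ≤ Real.exp (-ε*k) / (t^2 + ε^2) := h1
    _ ≤ Real.exp (-ε*k) / (ε^2 * (1+t^2)) :=
        div_le_div_of_nonneg_left (Real.exp_pos _).le (by positivity) h2
    _ = Real.exp (-ε*k)/ε^2 * (1+t^2)⁻¹ := by rw [div_mul_eq_div_div]; ring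

/-- Fourier-transform pricing of a European call: if `X` is the log-return,
`S > 0` the current price, `k` the log-strike and `ε ∈ (0,1)` is such that
`E[e^{(1+ε)X}] < ∞`, then
`E[(S e^X - e^k)⁺] = (1/(2π)) ∫ S^{iu+1} Ψ(u) e^{-iuk}/(iu - u²) dt`
along the contour `u = t - iε`, where `Ψ(u) = E[e^{(iu+1)X}]`. -/
theorem call_price_fourier {Ω : Type*} [MeasurableSpace Ω] (P : Measure Ω)
    [IsProbabilityMeasure P] (X : Ω → ℝ) (hX : Measurable X)
    (S k ε : ℝ) (hS : 0 < S) (hε : 0 < ε) (hε1 : ε < 1)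
    (hint : Integrable (fun ω => Real.exp ((1 + ε) * X ω)) P) :
    ((∫ ω, max (S * Real.exp (X ω) - Real.exp k) 0 ∂P : ℝ) : ℂ) =
      (1 / (2 * (π : ℂ))) *
        ∫ t : ℝ,
          Complex.exp ((Complex.I * ((t : ℂ) - Complex.I * ε) + 1) * (Real.log S : ℂ)) *
            (∫ ω, Complex.exp ((Complex.I * ((t : ℂ) - Complex.I * ε) + 1) * (X ω : ℂ)) ∂P) *
            Complex.exp (-Complex.I * ((t : ℂ) - Complex.I * ε) * (k : ℂ)) /
            (Complex.I * ((t : ℂ) - Complex.I * ε) - ((t : ℂ) - Complex.I * ε) ^ 2) := by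
  have hπ : (π:ℂ) ≠ 0 := Complex.ofReal_ne_zero.2 Real.pi_ne_zero
  set L : ℝ := Real.log S with hL
  -- the two-variable integrand
  set f : ℝ → Ω → ℂ := fun t ω =>
    Complex.exp ((Complex.I*((t:ℂ)-Complex.I*ε)+1) * ((L + X ω : ℝ) : ℂ)) * Ffun k ε t
    with hf
  -- step 1: rewrite the t-integrand as an ω-integral
  have step1 : ∀ t : ℝ,
      Complex.exp ((Complex.I * ((t : ℂ) - Complex.I * ε) + 1) * (L : ℂ)) *
        (∫ ω, Complex.exp ((Complex.I * ((t : ℂ) - Complex.I * ε) + 1) * (X ω : ℂ)) ∂P) *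
        Complex.exp (-Complex.I * ((t : ℂ) - Complex.I * ε) * (k : ℂ)) /
        (Complex.I * ((t : ℂ) - Complex.I * ε) - ((t : ℂ) - Complex.I * ε) ^ 2)
      = ∫ ω, f t ω ∂P := by
    intro t
    have : ∀ ω, f t ω = Complex.exp ((Complex.I*((t:ℂ)-Complex.I*ε)+1) * (L:ℂ)) *
        (Complex.exp ((Complex.I*((t:ℂ)-Complex.I*ε)+1) * ((X ω : ℝ):ℂ)) * Ffun k ε t) := by
      intro ω
      rw [hf]
      simp only []
      rw [← mul_assoc, ← Complex.exp_add]
      congr 2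
      push_cast
      ring
    rw [integral_congr_ae (Filter.Eventually.of_forall this), integral_const_mul,
      integral_mul_const]
    unfold Ffun
    ring
  -- joint integrability for Fubini
  have hmeas : AEStronglyMeasurable (Function.uncurry f) ((volume : Measure ℝ).prod P) := by
    apply Measurable.aestronglyMeasurable
    apply Measurable.mul
    · apply Complex.measurable_exp.comp
      apply Measurable.mul
      · apply Measurable.add _ measurable_const
        apply Measurable.mul measurable_const
        exact (Complex.measurable_ofReal.comp measurable_fst).sub measurable_const
      · exact Complex.measurable_ofReal.comp
          (measurable_const.add (hX.comp measurable_snd))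
    · exact (Ffun_cont k ε hε).measurable.comp measurable_fst
  have hFub : Integrable (Function.uncurry f) ((volume : Measure ℝ).prod P) := by
    have hmaj : Integrable (fun p : ℝ × Ω =>
        (Real.exp ((1+ε)*L) * (Real.exp (-ε*k)/ε^2) * (1+p.1^2)⁻¹) *
          Real.exp ((1+ε) * X p.2)) ((volume : Measure ℝ).prod P) :=
      Integrable.mul_prod (integrable_inv_one_add_sq.const_mul _) hint
    apply Integrable.mono' hmaj hmeas
    filter_upwards with p
    rw [Function.uncurry_apply_pair, hf]
    simp only []
    rw [norm_mul, norm_cexp_coeff]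
    calc Real.exp ((1+ε)*(L + X p.2)) * ‖Ffun k ε p.1‖
        ≤ Real.exp ((1+ε)*(L + X p.2)) * (Real.exp (-ε*k)/ε^2 * (1+p.1^2)⁻¹) := by
          apply mul_le_mul_of_nonneg_left (Ffun_norm_le' k ε hε hε1 p.1) (Real.exp_pos _).le
      _ = Real.exp ((1+ε)*L) * (Real.exp (-ε*k)/ε^2) * (1+p.1^2)⁻¹ * Real.exp ((1+ε)*X p.2) := by
          rw [show (1+ε)*(L + X p.2) = (1+ε)*L + (1+ε)*X p.2 by ring, Real.exp_add]
          ring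
  -- step 2: swap the integrals
  have step2 : ∫ t : ℝ, ∫ ω, f t ω ∂P = ∫ ω, (∫ t : ℝ, f t ω) ∂P :=
    integral_integral_swap hFub
  -- step 3: inner integral via the pointwise Fourier formula
  have step3 : ∀ ω, (∫ t : ℝ, f t ω)
      = 2*(π:ℂ) * ((max (S * Real.exp (X ω) - Real.exp k) 0 : ℝ) : ℂ) := by
    intro ω
    have hp := pointwise_formula k ε hε hε1 (L + X ω)
    have hexp : Real.exp (L + X ω) = S * Real.exp (X ω) := by
      rw [Real.exp_add, hL, Real.exp_log hS]
    rw [hexp] at hp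
    rw [hf]
    simp only []
    rw [hp, ← mul_assoc, mul_one_div_cancel (mul_ne_zero two_ne_zero hπ), one_mul]
  calc ((∫ ω, max (S * Real.exp (X ω) - Real.exp k) 0 ∂P : ℝ) : ℂ)
      = (1 / (2 * (π:ℂ))) * (2*(π:ℂ) *
          ((∫ ω, max (S * Real.exp (X ω) - Real.exp k) 0 ∂P : ℝ) : ℂ)) := by
        field_simp
    _ = (1 / (2 * (π:ℂ))) * ∫ t : ℝ, ∫ ω, f t ω ∂P := by
        rw [step2]
        congr 1
        rw [show ((∫ ω, max (S * Real.exp (X ω) - Real.exp k) 0 ∂P : ℝ) : ℂ)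
            = ∫ ω, ((max (S * Real.exp (X ω) - Real.exp k) 0 : ℝ) : ℂ) ∂P from
          (integral_ofReal (𝕜 := ℂ)).symm, ← integral_const_mul]
        exact (integral_congr_ae (Filter.Eventually.of_forall step3)).symm
    _ = _ := by
        congr 1
        exact (integral_congr_ae (Filter.Eventually.of_forall fun t => (step1 t).symm))
end

section
/- For every η > 0 and u ∈ ℝ, the function x ↦ (e^{iux} − 1) e^{−x/η} / x is absolutely integrable on (0, ∞) and ∫₀^∞ (e^{iux} − 1) e^{−x/η} / x dx = −Log(1 − iηu), where Log denotes the principal branch of the complex logarithm. -/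
open MeasureTheory Complex

open Set Filter Topology intervalIntegral




lemma aux_hasDerivAt (c : ℂ) (x : ℝ) :
    HasDerivAt (fun y : ℝ => Complex.exp (c * y)) (c * Complex.exp (c * x)) x := by
  have h : HasDerivAt (fun z : ℂ => Complex.exp (c * z)) (c * Complex.exp (c * x)) x := by
    simpa [mul_comm] using ((hasDerivAt_id (x : ℂ)).const_mul c).cexp
  simpa using h.comp_ofReal

lemma aux_integrable (c : ℂ) (hc : 0 < c.re) :
    IntegrableOn (fun x : ℝ => Complex.exp (-c * x)) (Ioi 0) := by
  refine ((exp_neg_integrableOn_Ioi 0 hc)).mono' ?_ ?_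
  · exact (Complex.continuous_exp.comp (by continuity)).aestronglyMeasurable
  · filter_upwards with x
    simp [Complex.norm_exp]

lemma aux_integral (c : ℂ) (hc : 0 < c.re) :
    ∫ x in Ioi (0 : ℝ), Complex.exp (-c * x) = 1 / c := by
  have hne : c ≠ 0 := fun h => by simp [h] at hc
  have hderiv : ∀ x ∈ Ici (0 : ℝ),
      HasDerivAt (fun y : ℝ => -Complex.exp (-c * y) / c) (Complex.exp (-c * x)) x := by
    intro x _
    have := ((aux_hasDerivAt (-c) x).neg).div_const c
    refine this.congr_deriv (Eq.symm ?_)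
    field_simp
  have htend : Tendsto (fun x : ℝ => -Complex.exp (-c * x) / c) atTop (𝓝 0) := by
    rw [tendsto_zero_iff_norm_tendsto_zero]
    have h1 : Tendsto (fun x : ℝ => Real.exp (-(c.re * x)) / ‖c‖) atTop (𝓝 (0 / ‖c‖)) := by
      apply Tendsto.div_const
      exact Real.tendsto_exp_neg_atTop_nhds_zero.comp (tendsto_id.const_mul_atTop hc)
    simp only [zero_div] at h1
    refine h1.congr fun x => ?_
    simp [Complex.norm_exp, Real.exp_neg, neg_mul, norm_div]
  have := integral_Ioi_of_hasDerivAt_of_tendsto' hderiv (aux_integrable c hc) htend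
  rw [this]; rw [Complex.ofReal_zero, mul_zero, Complex.exp_zero]; field_simp
  ring

lemma aux_ne (η t : ℝ) (hη : 0 < η) : ((1:ℂ)/η - Complex.I * t) ≠ 0 := by
  intro h
  have := congrArg Complex.re h
  simp [Complex.div_re] at this
  exact hη.ne' this

lemma aux_ne2 (η t : ℝ) : ((1:ℂ) - Complex.I * η * t) ≠ 0 := by
  intro h
  have := congrArg Complex.re h
  simp [Complex.sub_re, Complex.mul_re] at this

lemma aux_t_integral (η u : ℝ) (hη : 0 < η) :
    ∫ t in (0:ℝ)..u, Complex.I * (1 / ((1:ℂ)/η - Complex.I * t)) =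
      -Complex.log (1 - Complex.I * η * u) := by
  have key : ∀ t : ℝ, HasDerivAt (fun s : ℝ => -Complex.log (1 - Complex.I * η * s))
      (Complex.I * (1 / ((1:ℂ)/η - Complex.I * t))) t := by
    intro t
    have h1 : HasDerivAt (fun s : ℝ => (1 : ℂ) - Complex.I * η * s) (-(Complex.I * η)) t := by
      simpa using (((hasDerivAt_id ((t:ℝ) : ℂ)).const_mul (Complex.I * η)).const_sub 1).comp_ofReal
    have hz : ((1:ℂ) - Complex.I * η * t) ∈ Complex.slitPlane := by
      rw [Complex.mem_slitPlane_iff]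
      left
      simp [Complex.sub_re, Complex.mul_re]
    have h2 := ((Complex.hasDerivAt_log hz).comp t h1).neg
    refine h2.congr_deriv (Eq.symm ?_)
    have hne1 := aux_ne2 η t
    have hne := aux_ne η t hη
    have hηne : (η:ℂ) ≠ 0 := Complex.ofReal_ne_zero.mpr hη.ne'
    have hinv : (η:ℂ) * (1/η) = 1 := by field_simp
    rw [eq_comm]
    have hstep : -(((1:ℂ) - Complex.I * η * t)⁻¹ * -(Complex.I * η)) =
        Complex.I * η / (1 - Complex.I * η * t) := by ring
    rw [hstep, mul_one_div, div_eq_div_iff hne1 hne]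
    linear_combination Complex.I * hinv
  have hcont : Continuous fun t : ℝ => Complex.I * (1 / ((1:ℂ)/η - Complex.I * t)) := by
    apply continuous_const.mul
    exact continuous_const.div (by continuity) (fun t => aux_ne η t hη)
  rw [intervalIntegral.integral_eq_sub_of_hasDerivAt (fun t _ => key t)
    (hcont.intervalIntegrable 0 u)]
  simp

noncomputable def gg (η : ℝ) (x t : ℝ) : ℂ :=
  Complex.I * Complex.exp (Complex.I * t * x) * Real.exp (-x / η)

lemma gg_cont (η : ℝ) : Continuous fun p : ℝ × ℝ => gg η p.1 p.2 := by
  unfold gg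
  fun_prop

lemma gg_norm (η x t : ℝ) : ‖gg η x t‖ = Real.exp (-x / η) := by
  unfold gg
  simp [Complex.norm_exp, abs_of_pos (Real.exp_pos _)]

lemma expneg_integrable (η : ℝ) (hη : 0 < η) :
    IntegrableOn (fun x : ℝ => Real.exp (-x / η)) (Ioi 0) := by
  have h := exp_neg_integrableOn_Ioi 0 (one_div_pos.mpr hη)
  refine h.congr_fun (fun x _ => ?_) measurableSet_Ioi
  ring_nf

lemma aux_swap (η a b : ℝ) (hη : 0 < η) :
    ∫ x in Ioi (0:ℝ), ∫ t in Ioc a b, gg η x t =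
      ∫ t in Ioc a b, ∫ x in Ioi (0:ℝ), gg η x t := by
  apply integral_integral_swap
  rw [integrable_prod_iff]
  · constructor
    · filter_upwards with x
      exact (gg_cont η |>.comp (Continuous.prodMk_right x)).integrableOn_Ioc
    · have : ∀ x : ℝ, ∫ t in Ioc a b, ‖gg η x t‖ =
          (volume (Ioc a b)).toReal * Real.exp (-x / η) := by
        intro x
        simp only [gg_norm]
        rw [setIntegral_const]
        simp [smul_eq_mul]
        rw [ENNReal.toReal_ofReal']
      simp only [Function.uncurry]
      refine (((expneg_integrable η hη).const_mul (volume (Ioc a b)).toReal).congr ?_)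
      filter_upwards with x
      exact (this x).symm
  · exact ((gg_cont η).aestronglyMeasurable)

lemma inner_x_integral (η t : ℝ) (hη : 0 < η) :
    ∫ x in Ioi (0:ℝ), gg η x t = Complex.I * (1 / ((1:ℂ)/η - Complex.I * t)) := by
  have hηne : (η:ℂ) ≠ 0 := Complex.ofReal_ne_zero.mpr hη.ne'
  have hre : (0:ℝ) < ((1:ℂ)/η - Complex.I * t).re := by
    have : ((1:ℂ)/η - Complex.I * t) = ((1/η : ℝ) : ℂ) - Complex.I * t := by push_cast; ring
    rw [this]
    simp [Complex.sub_re, Complex.mul_re]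
    positivity
  have heq : ∀ x : ℝ, gg η x t =
      Complex.I * Complex.exp (-((1:ℂ)/η - Complex.I * t) * x) := by
    intro x
    unfold gg
    rw [mul_assoc, Complex.ofReal_exp, ← Complex.exp_add]
    congr 1
    push_cast
    field_simp
    ring
  simp only [heq]
  rw [MeasureTheory.integral_const_mul]
  rw [aux_integral _ hre]

section
variable (η u : ℝ)

lemma hrep_aux (hη : 0 < η) (x : ℝ) (hx : x ≠ 0) :
    (∫ t in (0:ℝ)..u, gg η x t) =
      (Complex.exp (Complex.I * u * x) - 1) * Real.exp (-x / η) / x := by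
  have hx' : (x:ℂ) ≠ 0 := Complex.ofReal_ne_zero.mpr hx
  unfold gg
  rw [show (fun t : ℝ => Complex.I * Complex.exp (Complex.I * t * x) * (Real.exp (-x/η) : ℂ))
      = fun t : ℝ => (Complex.I * Complex.exp (Complex.I * t * x)) * (Real.exp (-x/η) : ℂ)
      from rfl, intervalIntegral.integral_mul_const]
  have hd : ∀ t : ℝ, HasDerivAt (fun s : ℝ => Complex.exp (Complex.I * s * x) / x)
      (Complex.I * Complex.exp (Complex.I * t * x)) t := by
    intro t
    have e1 : (fun s : ℝ => Complex.exp (Complex.I * s * x) / x)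
        = fun s : ℝ => Complex.exp ((Complex.I * x) * s) / x := by
      ext s; ring_nf
    rw [e1]
    have h := (aux_hasDerivAt (Complex.I * x) t).div_const (x : ℂ)
    refine h.congr_deriv (Eq.symm ?_)
    have e2 : Complex.I * (t:ℂ) * x = Complex.I * x * t := by ring
    rw [e2]
    field_simp
  have hcont : Continuous fun t : ℝ => Complex.I * Complex.exp (Complex.I * t * x) := by
    fun_prop
  rw [intervalIntegral.integral_eq_sub_of_hasDerivAt (fun t _ => hd t)
    (hcont.intervalIntegrable 0 u)]
  simp only [Complex.ofReal_zero, mul_zero, zero_mul, Complex.exp_zero]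
  rw [div_sub_div_same, div_mul_eq_mul_div]

end


/-- The Frullani-type integral computing one side of the Lévy–Khintchine
exponent of the variance–gamma model: for `η > 0` and `u ∈ ℝ`, the function
`x ↦ (e^{iux} - 1) e^{-x/η} / x` is absolutely integrable on `(0, ∞)` and
`∫₀^∞ (e^{iux} - 1) e^{-x/η} / x dx = -Log(1 - iηu)` (principal branch). -/
theorem frullani_levy_exponent (η u : ℝ) (hη : 0 < η) :
    IntegrableOn (fun x : ℝ =>
        (Complex.exp (Complex.I * u * x) - 1) * Real.exp (-x / η) / x)
      (Set.Ioi 0) ∧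
    ∫ x in Set.Ioi (0 : ℝ),
        (Complex.exp (Complex.I * u * x) - 1) * Real.exp (-x / η) / x =
      -Complex.log (1 - Complex.I * η * u) := by
  set f : ℝ → ℂ := fun x =>
    (Complex.exp (Complex.I * u * x) - 1) * Real.exp (-x / η) / x with hf
  have hbound : ∀ x ∈ Ioi (0:ℝ), ‖f x‖ ≤ Real.exp (-x / η) * |u| := by
    intro x hx
    have h0 : f x = ∫ t in (0:ℝ)..u, gg η x t := (hrep_aux η u hη x (ne_of_gt hx)).symm
    rw [h0]
    have := intervalIntegral.norm_integral_le_of_norm_le_const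
      (a := (0:ℝ)) (b := u) (C := Real.exp (-x / η)) (f := fun t => gg η x t)
      (fun t _ => by rw [gg_norm])
    simpa using this
  have hmeas : AEStronglyMeasurable f (volume.restrict (Ioi 0)) := by
    apply ContinuousOn.aestronglyMeasurable _ measurableSet_Ioi
    apply ContinuousOn.div
    · fun_prop
    · fun_prop
    · exact fun x hx => Complex.ofReal_ne_zero.mpr (ne_of_gt hx)
  have hint : IntegrableOn f (Ioi 0) := by
    refine ((expneg_integrable η hη).mul_const |u|).mono' hmeas ?_
    filter_upwards [ae_restrict_mem measurableSet_Ioi] with x hx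
    exact hbound x hx
  refine ⟨hint, ?_⟩
  have h1 : ∫ x in Ioi (0:ℝ), f x = ∫ x in Ioi (0:ℝ), ∫ t in (0:ℝ)..u, gg η x t := by
    apply setIntegral_congr_fun measurableSet_Ioi
    exact fun x hx => (hrep_aux η u hη x (ne_of_gt hx)).symm
  rw [h1]
  rcases le_total 0 u with hu | hu
  · simp only [intervalIntegral.integral_of_le hu]
    rw [aux_swap η 0 u hη]
    have h2 : ∫ t in Ioc (0:ℝ) u, ∫ x in Ioi (0:ℝ), gg η x t
        = ∫ t in Ioc (0:ℝ) u, Complex.I * (1 / ((1:ℂ)/η - Complex.I * t)) :=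
      setIntegral_congr_fun measurableSet_Ioc fun t _ => inner_x_integral η t hη
    rw [h2, ← intervalIntegral.integral_of_le hu]
    exact aux_t_integral η u hη
  · have e0 : ∀ x : ℝ, (∫ t in (0:ℝ)..u, gg η x t) = -∫ t in Ioc u 0, gg η x t := by
      intro x
      rw [intervalIntegral.integral_symm, intervalIntegral.integral_of_le hu]
    simp only [e0]
    rw [MeasureTheory.integral_neg, aux_swap η u 0 hη]
    have h2 : ∫ t in Ioc u (0:ℝ), ∫ x in Ioi (0:ℝ), gg η x t
        = ∫ t in Ioc u (0:ℝ), Complex.I * (1 / ((1:ℂ)/η - Complex.I * t)) :=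
      setIntegral_congr_fun measurableSet_Ioc fun t _ => inner_x_integral η t hη
    rw [h2, ← intervalIntegral.integral_of_le hu, ← intervalIntegral.integral_symm]
    exact aux_t_integral η u hη
end
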